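/- Let G be a hypo-efficient-domination graph which is also vertex-domination-critical. Then for every vertex v of G, the graph G−v has exactly one efficient dominating set. If in addition G is regular, then G−v has a unique minimum dominating set for each v, so G is a hypo-unique-domination graph. -/

import Mathlib

open SimpleGraph

variable {V : Type*}

/-- `D` is a dominating set of `G`. -/
def IsDomSet (G : SimpleGraph V) (D : Finset V) : Prop :=
  ∀ v : V, ∃ u ∈ D, u = v ∨ G.Adj u v

/-- The domination number `γ(G)`. -/
noncomputable def domNum (G : SimpleGraph V) : ℕ :=
  sInf {n | ∃ D : Finset V, IsDomSet G D ∧ D.card = n}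

/-- `D` is a minimum dominating set (γ-set) of `G`. -/
def IsGammaSet (G : SimpleGraph V) (D : Finset V) : Prop :=
  IsDomSet G D ∧ D.card = domNum G

/-- The graph `G - x` obtained by deleting the vertex `x`. -/
def vdel (G : SimpleGraph V) (x : V) : SimpleGraph {u : V // u ≠ x} :=
  SimpleGraph.comap Subtype.val G

/-- `G` is a hypo-unique-domination graph: `G` has at least two γ-sets,
but `G - x` has a unique γ-set for every vertex `x`. -/
def HypoUD (G : SimpleGraph V) : Prop :=
  (∃ D₁ D₂ : Finset V, IsGammaSet G D₁ ∧ IsGammaSet G D₂ ∧ D₁ ≠ D₂) ∧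
  ∀ x : V, ∃! D : Finset {u : V // u ≠ x}, IsGammaSet (vdel G x) D

/-- `D` is an efficient dominating set of `G`: every vertex is dominated exactly once. -/
def IsEDS (G : SimpleGraph V) (D : Finset V) : Prop :=
  ∀ v : V, ∃! u : V, u ∈ D ∧ (u = v ∨ G.Adj u v)

/-- `G` is a hypo-efficient-domination graph: `G` has no EDS,
but `G - x` has an EDS for every vertex `x`. -/
def HypoED (G : SimpleGraph V) : Prop :=
  (¬ ∃ D : Finset V, IsEDS G D) ∧
  ∀ x : V, ∃ D : Finset {u : V // u ≠ x}, IsEDS (vdel G x) D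

/-!
Vertex-criticality forces `γ(G - v) = γ(G) - 1`. Hence an EDS `M_v` of `G - v` is a γ-set of
`G - v`, none of its vertices is adjacent to `v` (otherwise it would dominate `G`), and
`insert v M_v` is a γ-set of `G`.

If `u ∈ M_v` but `v ∉ M_u`, sending each vertex of `M_u` to its dominator in `M_v` injects `M_u`
into `M_v \ {u}`, which is too small. So `u ∈ M_v ↔ v ∈ M_u` for all choices of these EDSs, and
`M_v` is unique.

In a `k`-regular graph the closed neighbourhoods of `M_v` have `k + 1` vertices in `G - v` and
partition it, so by double counting every dominating set of `G - v` of size `|M_v|` is efficient.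
Finally, `G` has an edge `ab` (otherwise `V` is an EDS of `G`), and the γ-sets `insert a M_a` and
`insert b M_b` differ, as `b ∉ M_a`.
-/

open Finset Function

namespace SimpleGraph

/-- `v` lies in the closed neighbourhood of `u`; `IsDomSet` and `IsEDS` unfold to this relation. -/
def Dominates (G : SimpleGraph V) (u v : V) : Prop := u = v ∨ G.Adj u v

instance [DecidableEq V] (G : SimpleGraph V) [DecidableRel G.Adj] : DecidableRel G.Dominates :=
  fun _ _ => instDecidableOr

lemma Dominates.symm {G : SimpleGraph V} {u v : V} (h : G.Dominates u v) : G.Dominates v u :=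
  h.imp Eq.symm G.adj_symm

end SimpleGraph

section Domination

variable {G : SimpleGraph V} {D S : Finset V}

lemma card_le_card_of_forall_dominates {A B : Finset V}
    (hA : ∀ a ∈ A, ∃ b ∈ B, G.Dominates b a)
    (hB : ∀ b ∈ B, ∀ a₁ ∈ A, ∀ a₂ ∈ A, G.Dominates a₁ b → G.Dominates a₂ b → a₁ = a₂) :
    #A ≤ #B := by
  classical
  simpa using card_nsmul_le_card_nsmul (R := ℕ) (fun a b => G.Dominates b a) (s := A) (t := B)
    (m := 1) (n := 1)
    (fun a ha => by
      obtain ⟨b, hb, hba⟩ := hA a ha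
      exact card_pos.2 ⟨b, mem_bipartiteAbove _ |>.2 ⟨hb, hba⟩⟩)
    (fun b hb => card_le_one.2 fun a₁ h₁ a₂ h₂ => by
      rw [mem_bipartiteBelow] at h₁ h₂
      exact hB b hb a₁ h₁.1 a₂ h₂.1 h₁.2.symm h₂.2.symm)

lemma IsEDS.isDomSet (hD : IsEDS G D) : IsDomSet G D :=
  fun v => (hD v).exists.imp fun _ => id

lemma IsEDS.card_le (hD : IsEDS G D) (hS : IsDomSet G S) : #D ≤ #S :=
  card_le_card_of_forall_dominates (fun a _ => hS a)
    fun b _ _ h₁ _ h₂ d₁ d₂ => (hD b).unique ⟨h₁, d₁⟩ ⟨h₂, d₂⟩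

lemma IsDomSet.domNum_le_card (hD : IsDomSet G D) : domNum G ≤ #D :=
  Nat.sInf_le ⟨D, hD, rfl⟩

lemma exists_isGammaSet [Fintype V] (G : SimpleGraph V) : ∃ D, IsGammaSet G D :=
  Nat.sInf_mem (s := {n | ∃ D : Finset V, IsDomSet G D ∧ #D = n})
    ⟨_, univ, fun v => ⟨v, mem_univ v, Or.inl rfl⟩, rfl⟩

lemma IsEDS.isGammaSet [Fintype V] (hD : IsEDS G D) : IsGammaSet G D := by
  obtain ⟨S, hS, hcard⟩ := exists_isGammaSet G
  exact ⟨hD.isDomSet, le_antisymm (hcard ▸ hD.card_le hS) hD.isDomSet.domNum_le_card⟩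

lemma isEDS_univ_bot [Fintype V] : IsEDS (⊥ : SimpleGraph V) univ :=
  fun v => ⟨v, by simp⟩

end Domination

section DoubleCounting

variable [DecidableEq V] {G : SimpleGraph V} [DecidableRel G.Adj] {D : Finset V}

lemma isEDS_iff_forall_card_dominators_eq_one :
    IsEDS G D ↔ ∀ v, #{u ∈ D | G.Dominates u v} = 1 := by
  simp only [card_eq_one_iff_existsUnique, mem_filter]
  rfl

variable [Fintype V]

lemma sum_card_dominated_eq_sum_card_dominators (D : Finset V) :
    ∑ u ∈ D, #{v | G.Dominates u v} = ∑ v, #{u ∈ D | G.Dominates u v} :=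
  sum_card_bipartiteAbove_eq_sum_card_bipartiteBelow G.Dominates

lemma IsEDS.sum_card_dominated (hD : IsEDS G D) :
    ∑ u ∈ D, #{v | G.Dominates u v} = Fintype.card V := by
  rw [sum_card_dominated_eq_sum_card_dominators, Fintype.card_eq_sum_ones]
  exact sum_congr rfl fun v _ => isEDS_iff_forall_card_dominators_eq_one.1 hD v

lemma IsDomSet.isEDS_of_sum_card_dominated_le (hD : IsDomSet G D)
    (h : ∑ u ∈ D, #{v | G.Dominates u v} ≤ Fintype.card V) : IsEDS G D := by
  have hpos : ∀ v ∈ univ, 1 ≤ #{u ∈ D | G.Dominates u v} := fun v _ =>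
    card_pos.2 <| (hD v).imp fun u hu => mem_filter.2 hu
  rw [sum_card_dominated_eq_sum_card_dominators, Fintype.card_eq_sum_ones] at h
  refine isEDS_iff_forall_card_dominators_eq_one.2 fun v => ?_
  exact ((sum_eq_sum_iff_of_le hpos).1 (le_antisymm (sum_le_sum hpos) h) v (mem_univ v)).symm

lemma card_dominated_of_isRegularOfDegree {k : ℕ} (hG : G.IsRegularOfDegree k) (u : V) :
    #{v | G.Dominates u v} = k + 1 := by
  have : ({v | G.Dominates u v} : Finset V) = insert u (G.neighborFinset u) := by
    ext v
    rw [mem_filter, mem_insert, mem_neighborFinset]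
    simp [SimpleGraph.Dominates, eq_comm]
  rw [this, card_insert_of_notMem (by simp), card_neighborFinset_eq_degree, hG u]

end DoubleCounting

section VertexDeletion

variable {G : SimpleGraph V} {x : V} {D M : Finset {u : V // u ≠ x}}

instance [DecidableRel G.Adj] : DecidableRel (vdel G x).Adj :=
  fun a b => inferInstanceAs (Decidable (G.Adj a b))

lemma vdel_dominates_iff {u v : {u : V // u ≠ x}} :
    (vdel G x).Dominates u v ↔ G.Dominates u v := by
  rw [SimpleGraph.Dominates, SimpleGraph.Dominates, Subtype.ext_iff]
  rfl

lemma notMem_map_vdel : x ∉ D.map (Embedding.subtype _) := by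
  simp

lemma IsEDS.existsUnique_map_vdel (hM : IsEDS (vdel G x) M) {y : V} (hy : y ≠ x) :
    ∃! m, m ∈ M.map (Embedding.subtype _) ∧ G.Dominates m y := by
  obtain ⟨m, ⟨hm, hmy⟩, huniq⟩ := hM ⟨y, hy⟩
  refine ⟨m, ⟨mem_map_of_mem _ hm, vdel_dominates_iff.1 hmy⟩, ?_⟩
  rintro _ ⟨hm', hm'y⟩
  obtain ⟨m', hm'M, rfl⟩ := mem_map.1 hm'
  exact congrArg Subtype.val (huniq m' ⟨hm'M, vdel_dominates_iff.2 hm'y⟩)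

lemma IsDomSet.insert_map_vdel [DecidableEq V] (hD : IsDomSet (vdel G x) D) :
    IsDomSet G (insert x (D.map (Embedding.subtype _))) := by
  intro y
  by_cases hy : y = x
  · exact ⟨x, mem_insert_self _ _, Or.inl hy.symm⟩
  · obtain ⟨u, hu, huy⟩ := hD ⟨y, hy⟩
    exact ⟨u, mem_insert_of_mem (mem_map_of_mem _ hu), vdel_dominates_iff.1 huy⟩

lemma card_insert_map_vdel [DecidableEq V] :
    #(insert x (D.map (Embedding.subtype _))) = #D + 1 := by
  rw [card_insert_of_notMem notMem_map_vdel, card_map]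

lemma domNum_le_domNum_vdel_add_one [Fintype V] : domNum G ≤ domNum (vdel G x) + 1 := by
  classical
  obtain ⟨D, hD, hcard⟩ := exists_isGammaSet (vdel G x)
  exact hD.insert_map_vdel.domNum_le_card.trans_eq (by rw [card_insert_map_vdel, hcard])

lemma card_dominated_vdel [Fintype V] [DecidableEq V] [DecidableRel G.Adj]
    (u : {w : V // w ≠ x}) :
    #{v | (vdel G x).Dominates u v} = #(({v | G.Dominates u v} : Finset V).erase x) := by
  rw [← card_map (Embedding.subtype _)]
  congr 1
  ext v
  simp [vdel_dominates_iff, and_comm]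

variable [Fintype V] (hx : domNum (vdel G x) < domNum G)
include hx

lemma domNum_vdel_add_one : domNum (vdel G x) + 1 = domNum G :=
  le_antisymm hx domNum_le_domNum_vdel_add_one

lemma IsEDS.not_adj_vdel (hM : IsEDS (vdel G x) M) {m : V}
    (hm : m ∈ M.map (Embedding.subtype _)) : ¬ G.Adj m x := by
  classical
  intro hmx
  have hdom : IsDomSet G (M.map (Embedding.subtype _)) := fun y => by
    by_cases hy : y = x
    · exact ⟨m, hm, Or.inr (hy ▸ hmx)⟩
    · exact (hM.existsUnique_map_vdel hy).exists
  have := hdom.domNum_le_card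
  rw [card_map, hM.isGammaSet.2] at this
  omega

lemma IsEDS.isGammaSet_insert_map_vdel [DecidableEq V] (hM : IsEDS (vdel G x) M) :
    IsGammaSet G (insert x (M.map (Embedding.subtype _))) :=
  ⟨hM.isDomSet.insert_map_vdel, by
    rw [card_insert_map_vdel, hM.isGammaSet.2, domNum_vdel_add_one hx]⟩

lemma IsGammaSet.isEDS_vdel [DecidableEq V] [DecidableRel G.Adj] {k : ℕ}
    (hG : G.IsRegularOfDegree k) (hM : IsEDS (vdel G x) M) (hD : IsGammaSet (vdel G x) D) :
    IsEDS (vdel G x) D := by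
  have hcard : #D = #M := hD.2.trans hM.isGammaSet.2.symm
  refine hD.1.isEDS_of_sum_card_dominated_le ?_
  calc ∑ d ∈ D, #{v | (vdel G x).Dominates d v}
      ≤ ∑ _d ∈ D, (k + 1) := sum_le_sum fun d _ => by
        rw [card_dominated_vdel, ← card_dominated_of_isRegularOfDegree hG d]
        exact card_erase_le
    _ = ∑ _m ∈ M, (k + 1) := by rw [sum_const, sum_const, hcard]
    _ = ∑ m ∈ M, #{v | (vdel G x).Dominates m v} := sum_congr rfl fun m hm => by
        rw [card_dominated_vdel, erase_eq_of_notMem, card_dominated_of_isRegularOfDegree hG]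
        rw [mem_filter]
        rintro ⟨-, h | h⟩
        · exact m.2 h
        · exact hM.not_adj_vdel hx (mem_map_of_mem _ hm) h
    _ = Fintype.card _ := hM.sum_card_dominated

end VertexDeletion

section VertexCritical

variable [Fintype V] {G : SimpleGraph V} (hvc : ∀ v : V, domNum (vdel G v) < domNum G)
include hvc

lemma IsEDS.mem_map_vdel_of_mem {u v : V} {M : Finset {w : V // w ≠ v}}
    {D : Finset {w : V // w ≠ u}} (hM : IsEDS (vdel G v) M) (hD : IsEDS (vdel G u) D)
    (hu : u ∈ M.map (Embedding.subtype _)) :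
    v ∈ D.map (Embedding.subtype _) := by
  classical
  set M' := M.map (Embedding.subtype _)
  set D' := D.map (Embedding.subtype _)
  by_contra hv
  have hcard : #D' = #M' := by
    have h₁ := domNum_vdel_add_one (hvc u)
    have h₂ := domNum_vdel_add_one (hvc v)
    rw [card_map, card_map, hD.isGammaSet.2, hM.isGammaSet.2]
    omega
  have hdominated : ∀ d ∈ D', ∃ m ∈ M'.erase u, G.Dominates m d := fun d hd => by
    obtain ⟨m, ⟨hm, hmd⟩, -⟩ := hM.existsUnique_map_vdel (fun h => hv (h ▸ hd))
    refine ⟨m, mem_erase.2 ⟨?_, hm⟩, hmd⟩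
    rintro rfl
    rcases hmd with rfl | hmd
    · exact notMem_map_vdel hd
    · exact hD.not_adj_vdel (hvc m) hd hmd.symm
  have hefficient : ∀ m ∈ M'.erase u, ∀ d₁ ∈ D', ∀ d₂ ∈ D',
      G.Dominates d₁ m → G.Dominates d₂ m → d₁ = d₂ := fun m hm d₁ h₁ d₂ h₂ hd₁ hd₂ =>
    (hD.existsUnique_map_vdel (mem_erase.1 hm).1).unique ⟨h₁, hd₁⟩ ⟨h₂, hd₂⟩
  have hle := card_le_card_of_forall_dominates hdominated hefficient
  rw [card_erase_of_mem hu] at hle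
  have := card_pos.2 ⟨u, hu⟩
  omega

lemma eq_of_isEDS_vdel (hED : ∀ u, ∃ D : Finset {w : V // w ≠ u}, IsEDS (vdel G u) D) {x : V}
    {M₁ M₂ : Finset {w : V // w ≠ x}} (h₁ : IsEDS (vdel G x) M₁) (h₂ : IsEDS (vdel G x) M₂) :
    M₁ = M₂ := by
  have hsub : ∀ {M₁ M₂ : Finset {w : V // w ≠ x}}, IsEDS (vdel G x) M₁ → IsEDS (vdel G x) M₂ →
      M₁.map (Embedding.subtype _) ⊆ M₂.map (Embedding.subtype _) := by
    intro M₁ M₂ h₁ h₂ u hu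
    obtain ⟨D, hD⟩ := hED u
    exact hD.mem_map_vdel_of_mem hvc h₂ (h₁.mem_map_vdel_of_mem hvc hD hu)
  exact map_injective _ (Subset.antisymm (hsub h₁ h₂) (hsub h₂ h₁))

end VertexCritical

theorem hypoED_vc_unique_EDS_general [Fintype V] (G : SimpleGraph V)
    [DecidableRel G.Adj] (hED : HypoED G)
    (hvc : ∀ v : V, domNum (vdel G v) < domNum G) :
    (∀ x : V, ∃! D : Finset {u : V // u ≠ x}, IsEDS (vdel G x) D) ∧
    ((∃ k : ℕ, G.IsRegularOfDegree k) →
      (∀ x : V, ∃! D : Finset {u : V // u ≠ x}, IsGammaSet (vdel G x) D) ∧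
        HypoUD G) := by
  classical
  have hEDS : ∀ x : V, ∃! D : Finset {u : V // u ≠ x}, IsEDS (vdel G x) D := fun x =>
    let ⟨M, hM⟩ := hED.2 x
    ⟨M, hM, fun _ hD => eq_of_isEDS_vdel hvc hED.2 hD hM⟩
  refine ⟨hEDS, fun ⟨k, hG⟩ => ?_⟩
  have hγ : ∀ x : V, ∃! D : Finset {u : V // u ≠ x}, IsGammaSet (vdel G x) D := fun x =>
    let ⟨M, hM, _⟩ := hEDS x
    ⟨M, hM.isGammaSet, fun _ hD => eq_of_isEDS_vdel hvc hED.2 (hD.isEDS_vdel (hvc x) hG hM) hM⟩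
  refine ⟨hγ, ⟨?_, hγ⟩⟩
  obtain ⟨a, b, hab⟩ : ∃ a b, G.Adj a b := by
    refine ne_bot_iff_exists_adj.1 fun hbot => hED.1 ⟨univ, ?_⟩
    exact hbot ▸ isEDS_univ_bot
  obtain ⟨Ma, hMa⟩ := hED.2 a
  obtain ⟨Mb, hMb⟩ := hED.2 b
  refine ⟨_, _, hMa.isGammaSet_insert_map_vdel (hvc a), hMb.isGammaSet_insert_map_vdel (hvc b),
    fun h => ?_⟩
  have hb : b ∈ insert a (Ma.map (Embedding.subtype _)) := h ▸ mem_insert_self _ _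
  rcases mem_insert.1 hb with rfl | hb
  · exact hab.ne rfl
  · exact hMa.not_adj_vdel (hvc a) hb hab.symm

theorem hypoED_vc_unique_EDS [Fintype V] [DecidableEq V] (G : SimpleGraph V)
    [DecidableRel G.Adj] (hED : HypoED G)
    (hvc : ∀ v : V, domNum (vdel G v) < domNum G) :
    (∀ x : V, ∃! D : Finset {u : V // u ≠ x}, IsEDS (vdel G x) D) ∧
    ((∃ k : ℕ, G.IsRegularOfDegree k) →
      (∀ x : V, ∃! D : Finset {u : V // u ≠ x}, IsGammaSet (vdel G x) D) ∧
        HypoUD G) :=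
  hypoED_vc_unique_EDS_general G hED hvc
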